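/- Let Z* be the membership matrix of a partition of {1,…,n} with minimum cluster size n̲, and let Z ∈ 𝒞 = {Zᵀ = Z, Z ⪰ 0, tr(Z) = K, Z𝟙ₙ = 𝟙ₙ, Z ≥ 0}. Then ‖(I − Z*)Z(I − Z*)‖_tr ≤ |Z* − Z*Z|₁/(2n̲), where ‖·‖_tr is the trace norm and |·|₁ the entrywise ℓ₁ norm. -/

import Mathlib

/-!
`Z*` is the orthogonal projection onto the span of the cluster indicators, so
`(I - Z*) Z (I - Z*)` is positive semidefinite and its trace norm is its trace
`tr Z - tr (Z* Z)`. Writing `W_k` for the mass `Z` puts on pairs `(i, j)` with `i ∈ G_k`, `j ∉ G_k`,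
the constraints `Z 𝟙 = 𝟙` and `tr Z = K` turn this trace into `∑ k, W_k / n_k ≤ ∑ k, W_k / n̲`.
On the other side, every row `i ∈ G_k` of `Z* - Z* Z` sums to zero and its entries outside `G_k`
sum to `-W_k / n_k`, so its ℓ₁ norm is at least `2 W_k / n_k`; summing over the `n_k` rows of
each cluster gives `|Z* - Z* Z|₁ ≥ 2 ∑ k, W_k`.
-/

open Finset Matrix

theorem Matrix.PosSemidef.sum_abs_eigenvalues_eq_trace {ι : Type*} [Fintype ι] [DecidableEq ι]
    {A : Matrix ι ι ℝ} (hA : A.PosSemidef) (hH : A.IsHermitian) :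
    ∑ i, |hH.eigenvalues i| = A.trace := by
  rw [hH.trace_eq_sum_eigenvalues]
  exact sum_congr rfl fun i _ => abs_of_nonneg (hA.eigenvalues_nonneg i)

theorem Matrix.trace_mul_mul_self_of_isIdempotentElem {ι R : Type*} [Fintype ι] [CommSemiring R]
    {Q : Matrix ι ι R} (hQ : IsIdempotentElem Q) (A : Matrix ι ι R) :
    (Q * A * Q).trace = (Q * A).trace := by
  rw [trace_mul_comm, ← Matrix.mul_assoc, hQ.eq]

theorem Finset.two_mul_abs_sum_le_sum_abs_of_sum_eq_zero {ι : Type*} [Fintype ι] [DecidableEq ι]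
    {v : ι → ℝ} (hv : ∑ j, v j = 0) (s : Finset ι) :
    2 * |∑ j ∈ s, v j| ≤ ∑ j, |v j| := by
  have hcompl : ∑ j ∈ sᶜ, v j = -∑ j ∈ s, v j := by
    rw [← sum_add_sum_compl s] at hv
    linarith
  calc 2 * |∑ j ∈ s, v j| = |∑ j ∈ s, v j| + |∑ j ∈ sᶜ, v j| := by rw [hcompl, abs_neg]; ring
    _ ≤ ∑ j ∈ s, |v j| + ∑ j ∈ sᶜ, |v j| :=
      add_le_add (abs_sum_le_sum_abs _ _) (abs_sum_le_sum_abs _ _)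
    _ = ∑ j, |v j| := sum_add_sum_compl s _

theorem Matrix.mulVec_one_apply {m n R : Type*} [Fintype n] [NonAssocSemiring R]
    (A : Matrix m n R) (i : m) : (A *ᵥ 1) i = ∑ j, A i j := by
  simp [mulVec, dotProduct]

namespace Clustering

variable {ι κ : Type*} [Fintype ι] [DecidableEq κ]

def cluster (c : ι → κ) (k : κ) : Finset ι := univ.filter fun l => c l = k

noncomputable def membershipMatrix (c : ι → κ) : Matrix ι ι ℝ :=
  fun i j => if c i = c j then 1 / ((cluster c (c i)).card : ℝ) else 0

def crossWeight [DecidableEq ι] (Z : Matrix ι ι ℝ) (c : ι → κ) (k : κ) : ℝ :=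
  ∑ i ∈ cluster c k, ∑ j ∈ (cluster c k)ᶜ, Z i j

variable {c : ι → κ}

@[simp]
theorem mem_cluster {k : κ} {i : ι} : i ∈ cluster c k ↔ c i = k := by
  simp [cluster]

theorem card_cluster_pos (c : ι → κ) (i : ι) : 0 < ((cluster c (c i)).card : ℝ) := by
  exact_mod_cast card_pos.mpr ⟨i, mem_cluster.mpr rfl⟩

theorem sum_div_card_cluster [Fintype κ] (f : κ → ι → ℝ) :
    ∑ i, f (c i) i / (cluster c (c i)).card =
      ∑ k, (∑ i ∈ cluster c k, f k i) / (cluster c k).card := by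
  rw [← sum_fiberwise univ c]
  refine sum_congr rfl fun k _ => ?_
  rw [sum_div]
  exact sum_congr rfl fun i hi => by rw [(mem_filter.mp hi).2]

theorem membershipMatrix_mul_apply (c : ι → κ) (A : Matrix ι ι ℝ) (i j : ι) :
    (membershipMatrix c * A) i j = (∑ l ∈ cluster c (c i), A l j) / (cluster c (c i)).card := by
  simp only [mul_apply, membershipMatrix, ite_mul, zero_mul, sum_div, cluster, sum_filter]
  refine sum_congr rfl fun l _ => ?_
  rcases eq_or_ne (c l) (c i) with h | h
  · simp [h, div_eq_mul_inv, mul_comm]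
  · simp [h, Ne.symm h]

theorem isIdempotentElem_membershipMatrix (c : ι → κ) : IsIdempotentElem (membershipMatrix c) := by
  ext i j
  have hrow : ∀ l ∈ cluster c (c i), membershipMatrix c l j = membershipMatrix c i j := by
    intro l hl
    simp only [membershipMatrix, mem_cluster.mp hl]
  rw [membershipMatrix_mul_apply, sum_congr rfl hrow, sum_const, nsmul_eq_mul,
    mul_div_cancel_left₀ _ (card_cluster_pos c i).ne']

theorem isHermitian_membershipMatrix (c : ι → κ) : (membershipMatrix c).IsHermitian := by
  ext i j
  by_cases h : c i = c j
  · simp [membershipMatrix, h]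
  · simp [membershipMatrix, h, Ne.symm h]

theorem membershipMatrix_mulVec_one (c : ι → κ) : membershipMatrix c *ᵥ 1 = 1 := by
  ext i
  simp only [mulVec, dotProduct, Pi.one_apply, mul_one, membershipMatrix, sum_ite, sum_const_zero,
    add_zero, sum_const, nsmul_eq_mul, eq_comm (a := c i)]
  exact mul_one_div_cancel (card_cluster_pos c i).ne'

theorem sum_comp_div_card_cluster [Fintype κ] (hc : ∀ k, (cluster c k).Nonempty) (g : κ → ℝ) :
    ∑ i, g (c i) / (cluster c (c i)).card = ∑ k, g k := by
  rw [sum_div_card_cluster fun k _ => g k]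
  refine sum_congr rfl fun k _ => ?_
  rw [sum_const, nsmul_eq_mul,
    mul_div_cancel_left₀ _ (by exact_mod_cast (hc k).card_pos.ne')]

theorem trace_membershipMatrix_mul [Fintype κ] [DecidableEq ι] {Z : Matrix ι ι ℝ}
    (hZ : Z *ᵥ 1 = 1) (hc : ∀ k, (cluster c k).Nonempty) :
    (membershipMatrix c * Z).trace =
      Fintype.card κ - ∑ k, crossWeight Z c k / (cluster c k).card := by
  have hblock : ∀ k, ∑ i ∈ cluster c k, ∑ l ∈ cluster c k, Z l i =
      (cluster c k).card - crossWeight Z c k := by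
    intro k
    rw [sum_comm, crossWeight, eq_sub_iff_add_eq, ← sum_add_distrib, card_eq_sum_ones,
      Nat.cast_sum, Nat.cast_one]
    exact sum_congr rfl fun l _ => by rw [sum_add_sum_compl, ← mulVec_one_apply, hZ, Pi.one_apply]
  simp only [trace, diag_apply, membershipMatrix_mul_apply]
  rw [sum_div_card_cluster fun k i => ∑ l ∈ cluster c k, Z l i]
  simp only [hblock, sub_div]
  rw [sum_sub_distrib, sum_congr rfl fun k _ => div_self (by exact_mod_cast (hc k).card_pos.ne'),
    sum_const, card_univ, nsmul_one]

theorem sum_compl_cluster_membershipMatrix_sub_mul [DecidableEq ι] (Z : Matrix ι ι ℝ) (i : ι) :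
    ∑ j ∈ (cluster c (c i))ᶜ, (membershipMatrix c - membershipMatrix c * Z) i j =
      -(crossWeight Z c (c i) / (cluster c (c i)).card) := by
  have hP : ∀ j ∈ (cluster c (c i))ᶜ, membershipMatrix c i j = 0 := by
    intro j hj
    rw [mem_compl, mem_cluster] at hj
    simp [membershipMatrix, Ne.symm hj]
  simp only [Matrix.sub_apply, membershipMatrix_mul_apply]
  rw [sum_sub_distrib, sum_congr rfl hP, sum_const_zero, zero_sub, crossWeight, ← sum_div,
    sum_comm]

theorem two_mul_sum_crossWeight_le [Fintype κ] [DecidableEq ι] {Z : Matrix ι ι ℝ}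
    (hZ : Z *ᵥ 1 = 1) (hc : ∀ k, (cluster c k).Nonempty) :
    2 * ∑ k, crossWeight Z c k ≤
      ∑ i, ∑ j, |(membershipMatrix c - membershipMatrix c * Z) i j| := by
  have hrow : (membershipMatrix c - membershipMatrix c * Z) *ᵥ 1 = 0 := by
    rw [sub_mulVec, ← mulVec_mulVec, hZ, membershipMatrix_mulVec_one, sub_self]
  calc 2 * ∑ k, crossWeight Z c k
      = ∑ i, 2 * (crossWeight Z c (c i) / (cluster c (c i)).card) := by
        rw [← mul_sum, sum_comp_div_card_cluster hc]
    _ ≤ ∑ i, 2 * |∑ j ∈ (cluster c (c i))ᶜ,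
          (membershipMatrix c - membershipMatrix c * Z) i j| := by
        gcongr with i
        rw [sum_compl_cluster_membershipMatrix_sub_mul, abs_neg]
        exact le_abs_self _
    _ ≤ _ := sum_le_sum fun i _ => two_mul_abs_sum_le_sum_abs_of_sum_eq_zero
        (by rw [← mulVec_one_apply, hrow, Pi.zero_apply]) _

end Clustering

open Clustering

theorem stmt_15_general {n K : ℕ} (c : Fin n → Fin K)
    (nmin : ℕ) (hnmin : 0 < nmin)
    (hsize : ∀ k : Fin K, nmin ≤ (Finset.univ.filter fun l => c l = k).card)
    (Zstar : Matrix (Fin n) (Fin n) ℝ)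
    (hZstar : ∀ i j, Zstar i j =
      if c i = c j then 1 / ((Finset.univ.filter fun l => c l = c i).card : ℝ) else 0)
    (Z : Matrix (Fin n) (Fin n) ℝ)
    (hpsd : Z.PosSemidef) (htr : Z.trace = (K : ℝ))
    (hrow : Z.mulVec (fun _ => (1 : ℝ)) = (fun _ => (1 : ℝ)))
    (hnonneg : ∀ i j, 0 ≤ Z i j)
    (hMH : ((1 - Zstar) * Z * (1 - Zstar)).IsHermitian) :
    (∑ i, |hMH.eigenvalues i|) ≤
      (∑ i, ∑ j, |(Zstar - Zstar * Z) i j|) / (2 * nmin) := by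
  obtain rfl : Zstar = membershipMatrix c := Matrix.ext hZstar
  have hc : ∀ k, (cluster c k).Nonempty := fun k => card_pos.mp (hnmin.trans_le (hsize k))
  have hcompress : ((1 - membershipMatrix c) * Z * (1 - membershipMatrix c)).PosSemidef := by
    have h := hpsd.conjTranspose_mul_mul_same (1 - membershipMatrix c)
    rwa [(isHermitian_one.sub (isHermitian_membershipMatrix c)).eq] at h
  rw [hcompress.sum_abs_eigenvalues_eq_trace hMH,
    trace_mul_mul_self_of_isIdempotentElem (isIdempotentElem_membershipMatrix c).one_sub,
    sub_mul, one_mul, trace_sub, htr, trace_membershipMatrix_mul hrow hc, Fintype.card_fin,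
    sub_sub_cancel]
  calc ∑ k, crossWeight Z c k / (cluster c k).card
      ≤ ∑ k, crossWeight Z c k / nmin := by
        refine sum_le_sum fun k _ => div_le_div_of_nonneg_left ?_ (by positivity) ?_
        · exact sum_nonneg fun i _ => sum_nonneg fun j _ => hnonneg i j
        · exact_mod_cast hsize k
    _ = (2 * ∑ k, crossWeight Z c k) / (2 * nmin) := by
        rw [← sum_div, mul_div_mul_left _ _ two_ne_zero]
    _ ≤ _ := div_le_div_of_nonneg_right (two_mul_sum_crossWeight_le hrow hc) (by positivity)

/-- For the membership matrix `Z*` of a partition (cluster map `c`, minimum cluster size at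
least `nmin > 0`) and any `Z` in the K-means SDP feasible set, the trace norm (sum of
absolute values of the eigenvalues of the Hermitian matrix `(I − Z*)Z(I − Z*)`) satisfies
`‖(I − Z*)Z(I − Z*)‖_tr ≤ |Z* − Z*Z|₁ / (2 nmin)`. -/
theorem stmt_15 {n K : ℕ} (c : Fin n → Fin K) (hc : Function.Surjective c)
    (nmin : ℕ) (hnmin : 0 < nmin)
    (hsize : ∀ k : Fin K, nmin ≤ (Finset.univ.filter fun l => c l = k).card)
    (Zstar : Matrix (Fin n) (Fin n) ℝ)
    (hZstar : ∀ i j, Zstar i j =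
      if c i = c j then 1 / ((Finset.univ.filter fun l => c l = c i).card : ℝ) else 0)
    (Z : Matrix (Fin n) (Fin n) ℝ)
    (hsymm : Z.transpose = Z) (hpsd : Z.PosSemidef) (htr : Z.trace = (K : ℝ))
    (hrow : Z.mulVec (fun _ => (1 : ℝ)) = (fun _ => (1 : ℝ)))
    (hnonneg : ∀ i j, 0 ≤ Z i j)
    (hMH : ((1 - Zstar) * Z * (1 - Zstar)).IsHermitian) :
    (∑ i, |hMH.eigenvalues i|) ≤
      (∑ i, ∑ j, |(Zstar - Zstar * Z) i j|) / (2 * nmin) :=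
  stmt_15_general c nmin hnmin hsize Zstar hZstar Z hpsd htr hrow hnonneg hMH
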